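/- Let F be a finite field with q elements and let C ⊆ F^n be a perfect t-error-correcting code, i.e., C is nonempty, has minimum Hamming distance 2t+1, and satisfies |C| · (Σ_{i=0}^{t} C(n,i)·(q−1)^i) = q^n. Then the minimum-distance graph G(C) = G_{2t+1}(C) (vertices are codewords, with distinct codewords adjacent iff their Hamming distance is at most 2t+1) is connected. -/

import Mathlib

open Finset in
/-- The α-distance graph of a code `C ⊆ F^n`: vertices are codewords, and two
distinct codewords are adjacent iff their Hamming distance is at most `α`. -/
def distGraph {F : Type*} [DecidableEq F] {n : ℕ} (C : Set (Fin n → F)) (α : ℕ) :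
    SimpleGraph C where
  Adj c₁ c₂ := c₁ ≠ c₂ ∧ hammingDist (c₁ : Fin n → F) (c₂ : Fin n → F) ≤ α
  symm := ⟨fun _ _ ⟨h, hd⟩ => ⟨h.symm, by rwa [hammingDist_comm]⟩⟩
  loopless := ⟨fun _ ⟨h, _⟩ => h rfl⟩

/-- `d` is the minimum Hamming distance of the code `C`. -/
def IsMinDist {F : Type*} [DecidableEq F] {n : ℕ} (C : Set (Fin n → F)) (d : ℕ) : Prop :=
  (∀ c₁ ∈ C, ∀ c₂ ∈ C, c₁ ≠ c₂ → d ≤ hammingDist c₁ c₂) ∧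
  (∃ c₁ ∈ C, ∃ c₂ ∈ C, c₁ ≠ c₂ ∧ hammingDist c₁ c₂ = d)

section Aux

open Finset

variable {F : Type*} [Fintype F] [DecidableEq F] {n : ℕ}

/-- The Hamming sphere of radius `i` around `x` has `C(n,i)·(q-1)^i` elements. -/
lemma hamming_sphere_card (x : Fin n → F) (i : ℕ) :
    (univ.filter fun y : Fin n → F => hammingDist y x = i).card
      = n.choose i * (Fintype.card F - 1) ^ i := by
  classical
  have hcell : ∀ s : Finset (Fin n),
      (Fintype.piFinset fun j => if j ∈ s then univ.erase (x j) else {x j}).card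
        = (Fintype.card F - 1) ^ s.card := by
    intro s
    rw [Fintype.card_piFinset]
    have h : ∀ j, (if j ∈ s then univ.erase (x j) else ({x j} : Finset F)).card
        = if j ∈ s then Fintype.card F - 1 else 1 := by
      intro j; split <;> simp [Finset.card_erase_of_mem, Finset.card_univ]
    simp_rw [h]
    rw [Finset.prod_ite_mem, Finset.univ_inter, Finset.prod_const]
  have hset : (univ.filter fun y : Fin n → F => hammingDist y x = i)
      = (Finset.powersetCard i (univ : Finset (Fin n))).biUnion
          (fun s => Fintype.piFinset fun j => if j ∈ s then univ.erase (x j) else {x j}) := by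
    ext y
    simp only [mem_filter, mem_univ, true_and, mem_biUnion, Finset.mem_powersetCard,
      Fintype.mem_piFinset]
    constructor
    · intro h
      refine ⟨univ.filter fun j => y j ≠ x j, ⟨subset_univ _, by simpa [hammingDist] using h⟩, ?_⟩
      intro j
      by_cases hj : y j = x j <;> simp [hj]
    · rintro ⟨s, ⟨-, hs⟩, hy⟩
      have hsupp : (univ.filter fun j => y j ≠ x j) = s := by
        ext j
        have hj := hy j
        by_cases h : j ∈ s <;> simp [h] at hj ⊢ <;> simp [hj, h]
      simpa [hammingDist, hsupp] using hs
  rw [hset, Finset.card_biUnion]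
  · simp_rw [hcell]
    rw [Finset.sum_congr rfl (fun s hs => by
      rw [(Finset.mem_powersetCard.mp hs).2]), Finset.sum_const, Finset.card_powersetCard,
      Finset.card_univ, Fintype.card_fin, smul_eq_mul]
  · intro s hs s' hs' hne
    rw [Function.onFun, Finset.disjoint_left]
    intro y hy hy'
    apply hne
    simp only [Fintype.mem_piFinset] at hy hy'
    ext j
    have h1 := hy j; have h2 := hy' j
    by_cases h : j ∈ s <;> by_cases h' : j ∈ s' <;> simp [h, h'] at h1 h2 ⊢
    · exact h1 h2
    · exact h2 h1

/-- The Hamming ball of radius `t` around `x` has `∑_{i≤t} C(n,i)·(q-1)^i` elements. -/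
lemma hamming_ball_card (x : Fin n → F) (t : ℕ) :
    (univ.filter fun y : Fin n → F => hammingDist y x ≤ t).card
      = ∑ i ∈ Finset.range (t + 1), n.choose i * (Fintype.card F - 1) ^ i := by
  classical
  have hset : (univ.filter fun y : Fin n → F => hammingDist y x ≤ t)
      = (Finset.range (t + 1)).biUnion
          (fun i => univ.filter fun y : Fin n → F => hammingDist y x = i) := by
    ext y
    simp [Nat.lt_succ_iff]
  rw [hset, Finset.card_biUnion]
  · exact Finset.sum_congr rfl fun i _ => hamming_sphere_card x i
  · intro i hi j hj hne
    rw [Function.onFun, Finset.disjoint_left]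
    intro y hy hy'
    simp only [mem_filter] at hy hy'
    exact hne (hy.2 ▸ hy'.2)

/-- In a perfect `t`-error-correcting code, every word is within distance `t`
of some codeword. -/
lemma perfect_code_covering {t : ℕ} (C : Set (Fin n → F))
    (hmd : ∀ c₁ ∈ C, ∀ c₂ ∈ C, c₁ ≠ c₂ → 2 * t + 1 ≤ hammingDist c₁ c₂)
    (hperfect : C.ncard * (∑ i ∈ Finset.range (t + 1),
        n.choose i * (Fintype.card F - 1) ^ i) = Fintype.card F ^ n)
    (w : Fin n → F) : ∃ c ∈ C, hammingDist w c ≤ t := by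
  classical
  have hfin : C.Finite := Set.toFinite C
  set Cf := hfin.toFinset with hCf
  have hmem : ∀ c, c ∈ Cf ↔ c ∈ C := fun c => hfin.mem_toFinset
  have hballs : (Cf.biUnion fun c => univ.filter fun y : Fin n → F => hammingDist y c ≤ t)
      = univ := by
    apply Finset.eq_univ_of_card
    rw [Finset.card_biUnion]
    · have : ∀ c ∈ Cf, (univ.filter fun y : Fin n → F => hammingDist y c ≤ t).card
          = ∑ i ∈ Finset.range (t + 1), n.choose i * (Fintype.card F - 1) ^ i :=
        fun c _ => hamming_ball_card c t
      rw [Finset.sum_congr rfl this, Finset.sum_const, smul_eq_mul]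
      have hcard : #Cf = C.ncard := (Set.ncard_eq_toFinset_card C hfin).symm
      rw [hcard, hperfect]
      simp [Fintype.card_fun]
    · intro c hc c' hc' hne
      rw [Function.onFun, Finset.disjoint_left]
      intro y hy hy'
      simp only [mem_filter, mem_univ, true_and] at hy hy'
      have := hmd c ((hmem c).mp hc) c' ((hmem c').mp hc') hne
      have htri := hammingDist_triangle c y c'
      rw [hammingDist_comm c y] at htri
      omega
  have : w ∈ (Cf.biUnion fun c => univ.filter fun y : Fin n → F => hammingDist y c ≤ t) := by
    rw [hballs]; exact mem_univ w
  obtain ⟨c, hc, hw⟩ := Finset.mem_biUnion.mp this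
  exact ⟨c, (hmem c).mp hc, (mem_filter.mp hw).2⟩

end Aux

open Finset in
/-- The minimum-distance graph of a perfect `t`-error-correcting code (a nonempty
code with minimum distance `2t+1` attaining the Hamming bound) is connected. -/
theorem perfect_code_minDistGraph_connected
    {F : Type*} [Field F] [Fintype F] [DecidableEq F]
    {n t : ℕ} (C : Set (Fin n → F)) (hC : C.Nonempty)
    (hmd : IsMinDist C (2 * t + 1))
    (hperfect : C.ncard * (∑ i ∈ Finset.range (t + 1),
        n.choose i * (Fintype.card F - 1) ^ i) = Fintype.card F ^ n) :
    (distGraph C (2 * t + 1)).Connected := by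
  classical
  have hcov : ∀ w, ∃ c ∈ C, hammingDist w c ≤ t :=
    perfect_code_covering C hmd.1 hperfect
  have key : ∀ d : ℕ, ∀ c₁ c₂ : C, hammingDist (c₁ : Fin n → F) c₂ ≤ d →
      (distGraph C (2 * t + 1)).Reachable c₁ c₂ := by
    intro d
    induction d with
    | zero =>
      intro c₁ c₂ h
      have : c₁ = c₂ := Subtype.ext (hammingDist_eq_zero.mp (Nat.le_zero.mp h))
      exact this ▸ SimpleGraph.Reachable.refl c₁
    | succ d ih =>
      intro c₁ c₂ h
      by_cases heq : c₁ = c₂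
      · exact heq ▸ SimpleGraph.Reachable.refl c₁
      by_cases hle : hammingDist (c₁ : Fin n → F) c₂ ≤ 2 * t + 1
      · exact SimpleGraph.Adj.reachable (show _ ∧ _ from ⟨heq, hle⟩)
      push_neg at hle
      set D := univ.filter fun j => (c₁ : Fin n → F) j ≠ (c₂ : Fin n → F) j with hD
      have hDcard : D.card = hammingDist (c₁ : Fin n → F) c₂ := rfl
      obtain ⟨s, hsub, hscard⟩ := Finset.exists_subset_card_eq
        (show t + 1 ≤ D.card by omega)
      set w : Fin n → F := fun j => if j ∈ s then (c₂ : Fin n → F) j else (c₁ : Fin n → F) j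
        with hw
      have hd1 : hammingDist (c₁ : Fin n → F) w = t + 1 := by
        have : (univ.filter fun j => (c₁ : Fin n → F) j ≠ w j) = s := by
          ext j
          by_cases hj : j ∈ s
          · have := hsub hj
            simp only [hD, mem_filter, mem_univ, true_and] at this
            simp [hw, hj, this]
          · simp [hw, hj]
        rw [show hammingDist (c₁ : Fin n → F) w
          = (univ.filter fun j => (c₁ : Fin n → F) j ≠ w j).card from rfl, this, hscard]
      have hd2 : hammingDist w (c₂ : Fin n → F) = D.card - (t + 1) := by
        have hDs : (univ.filter fun j => w j ≠ (c₂ : Fin n → F) j) = D \ s := by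
          ext j
          by_cases hj : j ∈ s
          · simp [hw, hj]
          · simp [hw, hj, hD]
        rw [show hammingDist w (c₂ : Fin n → F)
          = (univ.filter fun j => w j ≠ (c₂ : Fin n → F) j).card from rfl, hDs,
          Finset.card_sdiff_of_subset hsub, hscard]
      obtain ⟨c₃, hc₃C, hwc₃⟩ := hcov w
      have hd13 : hammingDist (c₁ : Fin n → F) c₃ ≤ 2 * t + 1 := by
        have := hammingDist_triangle (c₁ : Fin n → F) w c₃
        omega
      have hne13 : c₁ ≠ (⟨c₃, hc₃C⟩ : C) := by
        intro hcontr
        have : (c₁ : Fin n → F) = c₃ := congrArg Subtype.val hcontr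
        rw [← this] at hwc₃
        have := hammingDist_triangle (c₁ : Fin n → F) w (c₁ : Fin n → F)
        rw [hammingDist_comm w (c₁ : Fin n → F)] at hwc₃
        simp [hd1] at this
        omega
      have hd32 : hammingDist c₃ (c₂ : Fin n → F) ≤ d := by
        have h1 := hammingDist_triangle c₃ w (c₂ : Fin n → F)
        rw [hammingDist_comm c₃ w] at h1
        omega
      have hadj : (distGraph C (2 * t + 1)).Adj c₁ ⟨c₃, hc₃C⟩ := show _ ∧ _ from ⟨hne13, hd13⟩
      exact hadj.reachable.trans (ih ⟨c₃, hc₃C⟩ c₂ hd32)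
  have : Nonempty C := hC.to_subtype
  exact SimpleGraph.Connected.mk fun c₁ c₂ => key (hammingDist (c₁ : Fin n → F) c₂) c₁ c₂ le_rfl
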